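/- Let n ≥ 2, D = 2^n, and let μ be a probability measure on the unit sphere of ℂ^D whose output-probability moments of total degree at most 4 match the Haar values up to additive error 10^{−3}·D^{−10}: for every tuple of pairwise distinct strings x₁,…,x_k ∈ {0,1}^n and positive integers λ₁,…,λ_k with t = λ₁+⋯+λ_k ≤ 4, |E_{ψ∼μ}[∏_{l=1}^k P_ψ(x_l)^{λ_l}] − (∏_l λ_l!)/(D·(D+1)···(D+t−1))| ≤ 10^{−3}·D^{−10}. Then for every c > 0, μ{ψ : d_TV(P_ψ, 𝒰) ≥ 1/(20·√(c+18))} ≥ 1 − 100·2^{−n} − 25/c. -/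

import Mathlib

open MeasureTheory

/-- The Borel measurable structure on `EuclideanSpace ℂ ι`. -/
noncomputable instance euclideanComplexMeasurableSpace (ι : Type*) :
    MeasurableSpace (EuclideanSpace ℂ ι) :=
  MeasurableSpace.comap (WithLp.ofLp (p := 2)) MeasurableSpace.pi

/-!
Write `P = P_ψ`, `D = 2ⁿ` and `Q = ∑ₓ P(x)²` for the collision probability. The moments of
degree 2 and 4 give `E Q ≈ 2/(D+1)` and `E (Q - 2/(D+1))² ≤ 25/D³`, so by Chebyshev
`Q > 2/(D+1) - 1/(2D)` outside probability `100/D`. On the unit sphere `∑ₓ P(x) = 1`, hence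
`∑ₓ (P(x) - 1/D)² = Q - 1/D`, which is then larger than `a = 2/(D+1) - 3/(2D) > 0`. Expanding
the fourth power, the moments of degree at most 4 also give `E ∑ₓ (P(x) - 1/D)⁴ ≤ 2500 a³`, so by
Markov `∑ₓ (P(x) - 1/D)⁴ < 100 a³ (c+18)` outside probability `25/c`. On the remaining event the
Hölder-type inequality `(∑ b²)³ ≤ (∑ |b|)² ∑ b⁴` yields `(∑ₓ |P(x) - 1/D|)² > 1/(100 (c+18))`,
that is, `d_TV(P, 𝒰) > 1/(20 √(c+18))`.
-/

open Finset
open scoped Nat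

instance euclideanComplexBorelSpace (ι : Type*) [Finite ι] :
    BorelSpace (EuclideanSpace ℂ ι) :=
  PiLp.borelSpace 2 (X := fun _ : ι => ℂ)

theorem sum_sq_pow_three_le_sq_sum_abs_mul_sum_pow_four {ι : Type*} (s : Finset ι)
    (b : ι → ℝ) :
    (∑ x ∈ s, b x ^ 2) ^ 3 ≤ (∑ x ∈ s, |b x|) ^ 2 * ∑ x ∈ s, b x ^ 4 := by
  have h₁ : (∑ x ∈ s, b x ^ 2) ^ 2 ≤ (∑ x ∈ s, |b x|) * ∑ x ∈ s, |b x| ^ 3 :=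
    s.sum_sq_le_sum_mul_sum_of_sq_le_mul (fun _ _ => abs_nonneg _) (fun _ _ => by positivity)
      fun x _ => le_of_eq (by rw [show |b x| * |b x| ^ 3 = (|b x| ^ 2) ^ 2 by ring, sq_abs])
  have h₂ : (∑ x ∈ s, |b x| ^ 3) ^ 2 ≤ (∑ x ∈ s, b x ^ 2) * ∑ x ∈ s, b x ^ 4 :=
    s.sum_sq_le_sum_mul_sum_of_sq_le_mul (fun _ _ => by positivity) (fun _ _ => by positivity)
      fun x _ => le_of_eq (by rw [show (|b x| ^ 3) ^ 2 = (|b x| ^ 2) ^ 3 by ring, sq_abs]; ring)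
  rcases (sum_nonneg fun x _ => sq_nonneg (b x) : 0 ≤ ∑ x ∈ s, b x ^ 2).eq_or_lt with h | h
  · rw [← h, zero_pow three_ne_zero]
    positivity
  refine le_of_mul_le_mul_right ?_ h
  calc (∑ x ∈ s, b x ^ 2) ^ 3 * ∑ x ∈ s, b x ^ 2 = ((∑ x ∈ s, b x ^ 2) ^ 2) ^ 2 := by ring
    _ ≤ ((∑ x ∈ s, |b x|) * ∑ x ∈ s, |b x| ^ 3) ^ 2 := by gcongr
    _ = (∑ x ∈ s, |b x|) ^ 2 * (∑ x ∈ s, |b x| ^ 3) ^ 2 := by ring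
    _ ≤ (∑ x ∈ s, |b x|) ^ 2 * ((∑ x ∈ s, b x ^ 2) * ∑ x ∈ s, b x ^ 4) := by gcongr
    _ = ((∑ x ∈ s, |b x|) ^ 2 * ∑ x ∈ s, b x ^ 4) * ∑ x ∈ s, b x ^ 2 := by ring

theorem one_lt_mul_sq_sum_abs {ι : Type*} (s : Finset ι) (b : ι → ℝ) {a K : ℝ} (ha : 0 < a)
    (h₂ : a < ∑ x ∈ s, b x ^ 2) (h₄ : ∑ x ∈ s, b x ^ 4 ≤ K * a ^ 3) :
    1 < K * (∑ x ∈ s, |b x|) ^ 2 := by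
  have : a ^ 3 * 1 < a ^ 3 * (K * (∑ x ∈ s, |b x|) ^ 2) :=
    calc a ^ 3 * 1 = a ^ 3 := mul_one _
      _ < (∑ x ∈ s, b x ^ 2) ^ 3 := pow_lt_pow_left₀ h₂ ha.le three_ne_zero
      _ ≤ (∑ x ∈ s, |b x|) ^ 2 * ∑ x ∈ s, b x ^ 4 :=
        sum_sq_pow_three_le_sq_sum_abs_mul_sum_pow_four s b
      _ ≤ (∑ x ∈ s, |b x|) ^ 2 * (K * a ^ 3) := by gcongr
      _ = a ^ 3 * (K * (∑ x ∈ s, |b x|) ^ 2) := by ring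
  exact lt_of_mul_lt_mul_left this (pow_pos ha 3).le

theorem sum_sum_ite_eq {ι : Type*} [Fintype ι] [DecidableEq ι] (a b : ℝ) :
    ∑ x : ι, ∑ y : ι, (if x = y then a else b)
      = Fintype.card ι * a + ((Fintype.card ι : ℝ) ^ 2 - Fintype.card ι) * b := by
  have split : ∀ x y : ι, (if x = y then a else b) = b + if x = y then a - b else 0 := by
    intro x y
    split_ifs <;> ring
  simp only [split, sum_add_distrib, sum_ite_eq, mem_univ, if_true, sum_const,
    Finset.card_univ, nsmul_eq_mul]
  ring

theorem integral_sub_const_sq {Ω : Type*} [MeasurableSpace Ω] {μ : Measure Ω}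
    [IsProbabilityMeasure μ] {f : Ω → ℝ} (hf : Integrable f μ)
    (hf2 : Integrable (fun ω => f ω ^ 2) μ) (m : ℝ) :
    ∫ ω, (f ω - m) ^ 2 ∂μ = ∫ ω, f ω ^ 2 ∂μ - 2 * m * ∫ ω, f ω ∂μ + m ^ 2 := by
  have hlin : Integrable (fun ω => f ω ^ 2 - 2 * m * f ω) μ := hf2.sub (hf.const_mul _)
  have expand : ∀ ω, (f ω - m) ^ 2 = f ω ^ 2 - 2 * m * f ω + m ^ 2 := fun ω => by ring
  simp only [expand]
  rw [integral_add hlin (integrable_const _),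
    integral_sub hf2 (hf.const_mul _), integral_const_mul]
  simp

-- In both estimates below, writing `D = u + 4` turns the difference of the two sides, after
-- clearing denominators, into a polynomial in `u` with nonnegative coefficients.
theorem collision_variance_numeric_le (D : ℝ) (hD : 4 ≤ D) :
    D * (24 / (D * (D + 1) * (D + 2) * (D + 3)) + 1 / (1000 * D ^ 10))
      + (D ^ 2 - D) * (4 / (D * (D + 1) * (D + 2) * (D + 3)) + 1 / (1000 * D ^ 10))
      - 2 * (2 / (D + 1)) * (D * (2 / (D * (D + 1)) - 1 / (1000 * D ^ 10)))
      + (2 / (D + 1)) ^ 2 ≤ 25 / D ^ 3 := by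
  obtain ⟨u, hu, rfl⟩ : ∃ u : ℝ, 0 ≤ u ∧ D = u + 4 := ⟨D - 4, by linarith, by ring⟩
  have : 0 < u + 4 := by linarith
  rw [← sub_nonneg]
  field_simp
  ring_nf
  positivity

theorem fourth_moment_numeric_le (D : ℝ) (hD : 4 ≤ D) :
    D * (24 / (D * (D + 1) * (D + 2) * (D + 3)) + 1 / (1000 * D ^ 10)
      - 4 * D⁻¹ * (6 / (D * (D + 1) * (D + 2)) - 1 / (1000 * D ^ 10))
      + 6 * D⁻¹ ^ 2 * (2 / (D * (D + 1)) + 1 / (1000 * D ^ 10))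
      - 4 * D⁻¹ ^ 3 * (1 / D - 1 / (1000 * D ^ 10)) + D⁻¹ ^ 4)
    ≤ 2500 * (2 / (D + 1) - 3 / (2 * D)) ^ 3 := by
  obtain ⟨u, hu, rfl⟩ : ∃ u : ℝ, 0 ≤ u ∧ D = u + 4 := ⟨D - 4, by linarith, by ring⟩
  have : 0 < u + 4 := by linarith
  rw [← sub_nonneg]
  field_simp
  ring_nf
  positivity

theorem collision_gap_pos (D : ℝ) (hD : 4 ≤ D) : 0 < 2 / (D + 1) - 3 / (2 * D) := by
  rw [sub_pos, div_lt_div_iff₀ (by linarith) (by linarith)]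
  linarith

noncomputable section

variable {ι : Type*}

def bornProb (ψ : EuclideanSpace ℂ ι) (x : ι) : ℝ := ‖ψ x‖ ^ 2

@[fun_prop]
theorem continuous_bornProb (x : ι) :
    Continuous fun ψ : EuclideanSpace ℂ ι => bornProb ψ x := by
  unfold bornProb
  fun_prop

variable [Fintype ι]

local notation "D" => (Fintype.card ι : ℝ)

def collisionProb (ψ : EuclideanSpace ℂ ι) : ℝ := ∑ x, bornProb ψ x ^ 2

def tvDistUniform (ψ : EuclideanSpace ℂ ι) : ℝ := 1 / 2 * ∑ x, |bornProb ψ x - D⁻¹|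

-- The Haar value of `E ∏ₗ P(xₗ)^λₗ` is `∏ₗ λₗ! / (D (D+1) ⋯ (D+t-1))` with `t = ∑ₗ λₗ`.
def MomentsMatchHaar (μ : Measure (EuclideanSpace ℂ ι)) (ε : ℝ) : Prop :=
  ∀ (k : ℕ) (x : Fin k → ι) (lam : Fin k → ℕ),
    Function.Injective x → (∀ l, 1 ≤ lam l) → ∑ l, lam l ≤ 4 →
      |(∫ ψ, ∏ l, ‖ψ (x l)‖ ^ (2 * lam l) ∂μ)
          - (∏ l, ((lam l)! : ℝ)) / ∏ j ∈ range (∑ l, lam l), (D + j)| ≤ ε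

@[fun_prop]
theorem continuous_collisionProb : Continuous (collisionProb (ι := ι)) := by
  unfold collisionProb
  fun_prop

@[fun_prop]
theorem continuous_tvDistUniform : Continuous (tvDistUniform (ι := ι)) := by
  unfold tvDistUniform
  fun_prop

theorem sum_bornProb_of_mem_sphere {ψ : EuclideanSpace ℂ ι}
    (hψ : ψ ∈ Metric.sphere (0 : EuclideanSpace ℂ ι) 1) : ∑ x, bornProb ψ x = 1 := by
  rw [mem_sphere_zero_iff_norm] at hψ
  simp [bornProb, ← EuclideanSpace.norm_sq_eq, hψ]

theorem sum_sq_bornProb_sub_inv_card {ψ : EuclideanSpace ℂ ι}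
    (hψ : ψ ∈ Metric.sphere (0 : EuclideanSpace ℂ ι) 1) :
    ∑ x, (bornProb ψ x - D⁻¹) ^ 2 = collisionProb ψ - D⁻¹ := by
  have hD : D * D⁻¹ ^ 2 = D⁻¹ := by
    rcases eq_or_ne D 0 with h | h
    · simp [h]
    · field_simp
  simp only [sub_sq, sum_add_distrib, sum_sub_distrib, ← sum_mul, ← mul_sum,
    sum_bornProb_of_mem_sphere hψ, sum_const, Finset.card_univ, nsmul_eq_mul, collisionProb]
  linear_combination hD

theorem le_tvDistUniform_of_mem_sphere {ψ : EuclideanSpace ℂ ι}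
    (hψ : ψ ∈ Metric.sphere (0 : EuclideanSpace ℂ ι) 1) (hD : 4 ≤ Fintype.card ι) {c : ℝ}
    (hc : 0 < c) (hQ : (collisionProb ψ - 2 / (D + 1)) ^ 2 < 1 / (4 * D ^ 2))
    (hR : ∑ x, (bornProb ψ x - D⁻¹) ^ 4 < 100 * (2 / (D + 1) - 3 / (2 * D)) ^ 3 * (c + 18)) :
    1 / (20 * √(c + 18)) ≤ tvDistUniform ψ := by
  have hD4 : (4 : ℝ) ≤ D := by exact_mod_cast hD
  have hD0 : (0 : ℝ) < D := by linarith
  have hQ' : 2 / (D + 1) - 1 / (2 * D) < collisionProb ψ := by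
    have hsq : 1 / (4 * D ^ 2) = (1 / (2 * D)) ^ 2 := by field_simp; ring
    have := (abs_lt_of_sq_lt_sq' (hQ.trans_eq hsq) (by positivity)).1
    linarith
  have h₂ : 2 / (D + 1) - 3 / (2 * D) < ∑ x, (bornProb ψ x - D⁻¹) ^ 2 := by
    have : 3 / (2 * D) = 1 / (2 * D) + D⁻¹ := by field_simp; ring
    rw [sum_sq_bornProb_sub_inv_card hψ]
    linarith
  have key := one_lt_mul_sq_sum_abs univ _ (collision_gap_pos D hD4) h₂
    (hR.le.trans_eq (by ring) : _ ≤ 100 * (c + 18) * (2 / (D + 1) - 3 / (2 * D)) ^ 3)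
  have hs : 0 < √(c + 18) := Real.sqrt_pos.2 (by linarith)
  have : 1 < 10 * √(c + 18) * ∑ x, |bornProb ψ x - D⁻¹| := by
    refine (one_lt_sq_iff₀ (by positivity)).1 ?_
    rw [mul_pow, mul_pow, Real.sq_sqrt (by linarith)]
    linarith
  rw [tvDistUniform, div_le_iff₀ (by positivity)]
  linarith

section Moments

variable {μ : Measure (EuclideanSpace ℂ ι)} {ε : ℝ}

theorem MomentsMatchHaar.integral_bornProb_pow (h : MomentsMatchHaar μ ε) (x : ι) {t : ℕ}
    (ht : 1 ≤ t) (ht4 : t ≤ 4) :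
    |∫ ψ, bornProb ψ x ^ t ∂μ - t ! / ∏ j ∈ range t, (D + j)| ≤ ε := by
  simpa [bornProb, ← pow_mul] using
    h 1 (fun _ => x) (fun _ => t) (Function.injective_of_subsingleton _) (fun _ => ht) (by simpa)

theorem MomentsMatchHaar.integral_bornProb (h : MomentsMatchHaar μ ε) (x : ι) :
    |∫ ψ, bornProb ψ x ∂μ - 1 / D| ≤ ε := by
  simpa using h.integral_bornProb_pow x le_rfl (by norm_num)

theorem MomentsMatchHaar.integral_bornProb_sq (h : MomentsMatchHaar μ ε) (x : ι) :
    |∫ ψ, bornProb ψ x ^ 2 ∂μ - 2 / (D * (D + 1))| ≤ ε := by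
  simpa [prod_range_succ] using h.integral_bornProb_pow x (t := 2) (by norm_num) (by norm_num)

theorem MomentsMatchHaar.integral_bornProb_pow_three (h : MomentsMatchHaar μ ε) (x : ι) :
    |∫ ψ, bornProb ψ x ^ 3 ∂μ - 6 / (D * (D + 1) * (D + 2))| ≤ ε := by
  convert h.integral_bornProb_pow x (t := 3) (by norm_num) (by norm_num) using 3
  norm_num [prod_range_succ, Nat.factorial]

theorem MomentsMatchHaar.integral_bornProb_pow_four (h : MomentsMatchHaar μ ε) (x : ι) :
    |∫ ψ, bornProb ψ x ^ 4 ∂μ - 24 / (D * (D + 1) * (D + 2) * (D + 3))| ≤ ε := by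
  convert h.integral_bornProb_pow x (t := 4) (by norm_num) (by norm_num) using 3
  norm_num [prod_range_succ, Nat.factorial]

theorem MomentsMatchHaar.integral_sq_mul_sq (h : MomentsMatchHaar μ ε) {x y : ι} (hxy : x ≠ y) :
    |∫ ψ, bornProb ψ x ^ 2 * bornProb ψ y ^ 2 ∂μ - 4 / (D * (D + 1) * (D + 2) * (D + 3))|
      ≤ ε := by
  have hinj : Function.Injective ![x, y] := by
    intro a b hab
    fin_cases a <;> fin_cases b <;> simp_all [eq_comm]
  convert h 2 ![x, y] (fun _ => 2) hinj (fun _ => by norm_num) (by simp) using 3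
  · simp [bornProb, ← pow_mul]
  · norm_num [prod_range_succ]

end Moments

section Sphere

variable {μ : Measure (EuclideanSpace ℂ ι)} [IsProbabilityMeasure μ]

theorem ae_mem_sphere (hμ : μ (Metric.sphere 0 1) = 1) :
    ∀ᵐ ψ ∂μ, ψ ∈ Metric.sphere (0 : EuclideanSpace ℂ ι) 1 :=
  (mem_ae_iff_prob_eq_one Metric.isClosed_sphere.measurableSet).mpr hμ

theorem integrable_of_continuous (hμ : μ (Metric.sphere 0 1) = 1)
    {f : EuclideanSpace ℂ ι → ℝ} (hf : Continuous f) : Integrable f μ := by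
  have := hf.continuousOn.integrableOn_compact (μ := μ) (isCompact_sphere 0 1)
  rwa [IntegrableOn, Measure.restrict_eq_self_of_ae_mem (ae_mem_sphere hμ)] at this

theorem integral_collisionProb (hμ : μ (Metric.sphere 0 1) = 1) :
    ∫ ψ, collisionProb ψ ∂μ = ∑ x, ∫ ψ, bornProb ψ x ^ 2 ∂μ :=
  integral_finsetSum _ fun _ _ => integrable_of_continuous hμ (by fun_prop)

theorem integral_collisionProb_sq (hμ : μ (Metric.sphere 0 1) = 1) :
    ∫ ψ, collisionProb ψ ^ 2 ∂μ
      = ∑ x, ∑ y, ∫ ψ, bornProb ψ x ^ 2 * bornProb ψ y ^ 2 ∂μ := by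
  simp only [collisionProb, sq (∑ x, _), sum_mul_sum]
  rw [integral_finsetSum _ fun _ _ => integrable_of_continuous hμ (by fun_prop)]
  exact sum_congr rfl fun _ _ =>
    integral_finsetSum _ fun _ _ => integrable_of_continuous hμ (by fun_prop)

theorem integral_bornProb_sub_pow_four (hμ : μ (Metric.sphere 0 1) = 1) (x : ι) (d : ℝ) :
    ∫ ψ, (bornProb ψ x - d) ^ 4 ∂μ
      = ∫ ψ, bornProb ψ x ^ 4 ∂μ - 4 * d * ∫ ψ, bornProb ψ x ^ 3 ∂μ
        + 6 * d ^ 2 * ∫ ψ, bornProb ψ x ^ 2 ∂μ - 4 * d ^ 3 * ∫ ψ, bornProb ψ x ∂μ + d ^ 4 := by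
  have expand : ∀ ψ, (bornProb ψ x - d) ^ 4 = bornProb ψ x ^ 4 - 4 * d * bornProb ψ x ^ 3
      + 6 * d ^ 2 * bornProb ψ x ^ 2 - 4 * d ^ 3 * bornProb ψ x + d ^ 4 := fun ψ => by ring
  simp only [expand]
  rw [integral_add, integral_sub, integral_add, integral_sub, integral_const_mul,
    integral_const_mul, integral_const_mul]
  · simp
  all_goals exact integrable_of_continuous hμ (by fun_prop)

theorem integral_collisionProb_sub_sq_le (hμ : μ (Metric.sphere 0 1) = 1)
    (hD : 4 ≤ Fintype.card ι) (h : MomentsMatchHaar μ (1 / (1000 * D ^ 10))) :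
    ∫ ψ, (collisionProb ψ - 2 / (D + 1)) ^ 2 ∂μ ≤ 25 / D ^ 3 := by
  classical
  set ε : ℝ := 1 / (1000 * D ^ 10)
  have hmean : D * (2 / (D * (D + 1)) - ε) ≤ ∫ ψ, collisionProb ψ ∂μ := by
    rw [integral_collisionProb hμ]
    calc D * (2 / (D * (D + 1)) - ε) = ∑ _x : ι, (2 / (D * (D + 1)) - ε) := by
          rw [sum_const, Finset.card_univ, nsmul_eq_mul]
      _ ≤ _ := sum_le_sum fun x _ => by linarith [(abs_le.mp (h.integral_bornProb_sq x)).1]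
  have hsq : ∫ ψ, collisionProb ψ ^ 2 ∂μ
      ≤ D * (24 / (D * (D + 1) * (D + 2) * (D + 3)) + ε)
        + (D ^ 2 - D) * (4 / (D * (D + 1) * (D + 2) * (D + 3)) + ε) := by
    rw [integral_collisionProb_sq hμ, ← sum_sum_ite_eq]
    refine sum_le_sum fun x _ => sum_le_sum fun y _ => ?_
    split_ifs with hxy
    · subst hxy
      simp only [← pow_add]
      linarith [(abs_le.mp (h.integral_bornProb_pow_four x)).2]
    · linarith [(abs_le.mp (h.integral_sq_mul_sq hxy)).2]
  rw [integral_sub_const_sq (integrable_of_continuous hμ (by fun_prop))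
    (integrable_of_continuous hμ (by fun_prop))]
  nlinarith [mul_le_mul_of_nonneg_left hmean (by positivity : (0 : ℝ) ≤ 2 * (2 / (D + 1))),
    collision_variance_numeric_le D (by exact_mod_cast hD)]

theorem integral_sum_bornProb_sub_inv_pow_four_le (hμ : μ (Metric.sphere 0 1) = 1)
    (hD : 4 ≤ Fintype.card ι) (h : MomentsMatchHaar μ (1 / (1000 * D ^ 10))) :
    ∫ ψ, ∑ x, (bornProb ψ x - D⁻¹) ^ 4 ∂μ ≤ 2500 * (2 / (D + 1) - 3 / (2 * D)) ^ 3 := by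
  set ε : ℝ := 1 / (1000 * D ^ 10)
  have hx : ∀ x, ∫ ψ, (bornProb ψ x - D⁻¹) ^ 4 ∂μ
      ≤ 24 / (D * (D + 1) * (D + 2) * (D + 3)) + ε
        - 4 * D⁻¹ * (6 / (D * (D + 1) * (D + 2)) - ε)
        + 6 * D⁻¹ ^ 2 * (2 / (D * (D + 1)) + ε) - 4 * D⁻¹ ^ 3 * (1 / D - ε) + D⁻¹ ^ 4 := by
    intro x
    rw [integral_bornProb_sub_pow_four hμ]
    have h₄ := (abs_le.mp (h.integral_bornProb_pow_four x)).2
    have h₃ := (abs_le.mp (h.integral_bornProb_pow_three x)).1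
    have h₂ := (abs_le.mp (h.integral_bornProb_sq x)).2
    have h₁ := (abs_le.mp (h.integral_bornProb x)).1
    nlinarith [mul_le_mul_of_nonneg_left h₃ (by positivity : (0 : ℝ) ≤ 4 * D⁻¹),
      mul_le_mul_of_nonneg_left h₂ (by positivity : (0 : ℝ) ≤ 6 * D⁻¹ ^ 2),
      mul_le_mul_of_nonneg_left h₁ (by positivity : (0 : ℝ) ≤ 4 * D⁻¹ ^ 3)]
  rw [integral_finsetSum _ fun _ _ => integrable_of_continuous hμ (by fun_prop)]
  refine (sum_le_sum fun x _ => hx x).trans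
    (le_of_eq_of_le ?_ (fourth_moment_numeric_le D (by exact_mod_cast hD)))
  rw [sum_const, Finset.card_univ, nsmul_eq_mul]

theorem measureReal_collisionProb_far_le (hμ : μ (Metric.sphere 0 1) = 1)
    (hD : 4 ≤ Fintype.card ι) (h : MomentsMatchHaar μ (1 / (1000 * D ^ 10))) :
    μ.real {ψ | 1 / (4 * D ^ 2) ≤ (collisionProb ψ - 2 / (D + 1)) ^ 2} ≤ 100 * D⁻¹ := by
  have hD0 : (0 : ℝ) < D := by positivity
  have := (mul_meas_ge_le_integral_of_nonneg (ae_of_all _ fun ψ => sq_nonneg _)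
    (integrable_of_continuous hμ (by fun_prop)) (1 / (4 * D ^ 2))).trans
    (integral_collisionProb_sub_sq_le hμ hD h)
  rw [show 25 / D ^ 3 = 1 / (4 * D ^ 2) * (100 * D⁻¹) by field_simp; ring] at this
  exact le_of_mul_le_mul_left this (by positivity)

theorem measureReal_sum_bornProb_sub_inv_pow_four_far_le (hμ : μ (Metric.sphere 0 1) = 1)
    (hD : 4 ≤ Fintype.card ι) (h : MomentsMatchHaar μ (1 / (1000 * D ^ 10))) {c : ℝ}
    (hc : 0 < c) :
    μ.real {ψ | 100 * (2 / (D + 1) - 3 / (2 * D)) ^ 3 * (c + 18)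
      ≤ ∑ x, (bornProb ψ x - D⁻¹) ^ 4} ≤ 25 / c := by
  have ha := collision_gap_pos D (by exact_mod_cast hD)
  have := (mul_meas_ge_le_integral_of_nonneg
    (ae_of_all _ fun ψ => sum_nonneg fun x _ => by positivity)
    (integrable_of_continuous hμ (by fun_prop))
    (100 * (2 / (D + 1) - 3 / (2 * D)) ^ 3 * (c + 18))).trans
    (integral_sum_bornProb_sub_inv_pow_four_le hμ hD h)
  rw [show 2500 * (2 / (D + 1) - 3 / (2 * D)) ^ 3
      = 100 * (2 / (D + 1) - 3 / (2 * D)) ^ 3 * (c + 18) * (25 / (c + 18)) by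
    field_simp; ring] at this
  refine (le_of_mul_le_mul_left this (by positivity)).trans ?_
  gcongr
  linarith

theorem sub_le_measureReal_le_tvDistUniform (hμ : μ (Metric.sphere 0 1) = 1)
    (hD : 4 ≤ Fintype.card ι) (h : MomentsMatchHaar μ (1 / (1000 * D ^ 10))) {c : ℝ}
    (hc : 0 < c) :
    1 - 100 * D⁻¹ - 25 / c ≤ μ.real {ψ | 1 / (20 * √(c + 18)) ≤ tvDistUniform ψ} := by
  set S := {ψ : EuclideanSpace ℂ ι | 1 / (20 * √(c + 18)) ≤ tvDistUniform ψ}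
  set A := {ψ : EuclideanSpace ℂ ι | 1 / (4 * D ^ 2) ≤ (collisionProb ψ - 2 / (D + 1)) ^ 2}
  set B := {ψ : EuclideanSpace ℂ ι | 100 * (2 / (D + 1) - 3 / (2 * D)) ^ 3 * (c + 18)
      ≤ ∑ x, (bornProb ψ x - D⁻¹) ^ 4}
  have hsub : Sᶜ ⊆ A ∪ B ∪ (Metric.sphere 0 1)ᶜ := by
    intro ψ hψS
    by_contra hgood
    simp only [A, B, Set.mem_union, Set.mem_compl_iff, Set.mem_ofPred_eq, not_or, not_le,
      not_not] at hgood
    exact hψS (le_tvDistUniform_of_mem_sphere hgood.2 hD hc hgood.1.1 hgood.1.2)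
  have hS : MeasurableSet S := (isClosed_le continuous_const (by fun_prop)).measurableSet
  have hsphere : μ.real (Metric.sphere 0 1)ᶜ = 0 := by
    rw [probReal_compl_eq_one_sub Metric.isClosed_sphere.measurableSet, measureReal_def, hμ,
      ENNReal.toReal_one, sub_self]
  calc 1 - 100 * D⁻¹ - 25 / c
      ≤ 1 - (μ.real A + μ.real B + μ.real (Metric.sphere 0 1)ᶜ) := by
        linarith [measureReal_collisionProb_far_le hμ hD h,
          measureReal_sum_bornProb_sub_inv_pow_four_far_le hμ hD h hc]
    _ ≤ 1 - μ.real Sᶜ := by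
        linarith [measureReal_mono (μ := μ) hsub, measureReal_union_le (μ := μ) A B,
          measureReal_union_le (μ := μ) (A ∪ B) (Metric.sphere 0 1)ᶜ]
    _ = μ.real S := by rw [probReal_compl_eq_one_sub hS]; ring

end Sphere

end

/-- **Far from uniform for approximate 4-designs.** Let `μ` be a probability measure on the
unit sphere of `ℂ^{2^n}` (`n ≥ 2`) whose output-probability moments of total degree at most 4
match the Haar values up to additive error `10⁻³·(2^n)⁻¹⁰`: for pairwise distinct strings
`x₁,…,x_k` and positive integers `λ₁,…,λ_k` with `t = Σλ_l ≤ 4`,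
`|E_ψ[∏_l P_ψ(x_l)^{λ_l}] − (∏_l λ_l!)/(D(D+1)⋯(D+t−1))| ≤ 10⁻³·D⁻¹⁰` where
`P_ψ(x) = |ψ_x|²`. Then for every `c > 0`,
`μ{ψ : d_TV(P_ψ, 𝒰) ≥ 1/(20√(c+18))} ≥ 1 − 100·2⁻ⁿ − 25/c`. -/
theorem stmt_12 (n : ℕ) (hn : 2 ≤ n)
    (μ : Measure (EuclideanSpace ℂ (Fin n → Bool))) [IsProbabilityMeasure μ]
    (hsphere : μ (Metric.sphere 0 1) = 1)
    (hmom : ∀ (k : ℕ) (x : Fin k → (Fin n → Bool)) (lam : Fin k → ℕ),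
      Function.Injective x → (∀ l, 1 ≤ lam l) → (∑ l, lam l) ≤ 4 →
      |(∫ ψ, ∏ l : Fin k, ‖ψ (x l)‖ ^ (2 * lam l) ∂μ)
          - (∏ l : Fin k, (Nat.factorial (lam l) : ℝ))
              / ∏ j ∈ Finset.range (∑ l, lam l), ((2 : ℝ) ^ n + j)|
        ≤ 1 / (1000 * ((2 : ℝ) ^ n) ^ 10))
    (c : ℝ) (hc : 0 < c) :
    ENNReal.ofReal (1 - 100 * ((2 : ℝ) ^ n)⁻¹ - 25 / c)
      ≤ μ {ψ | 1 / (20 * Real.sqrt (c + 18))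
            ≤ (1 / 2) * ∑ x : Fin n → Bool,
                |‖ψ x‖ ^ 2 - ((2 : ℝ) ^ n)⁻¹|} := by
  have hcard : (Fintype.card (Fin n → Bool) : ℝ) = 2 ^ n := by simp
  have hD : 4 ≤ Fintype.card (Fin n → Bool) := by
    simpa using Nat.pow_le_pow_right two_pos hn
  have h : MomentsMatchHaar μ (1 / (1000 * (Fintype.card (Fin n → Bool) : ℝ) ^ 10)) := by
    simpa only [MomentsMatchHaar, hcard] using hmom
  have := sub_le_measureReal_le_tvDistUniform hsphere hD h hc
  simp only [tvDistUniform, bornProb, hcard] at this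
  exact ENNReal.ofReal_le_of_le_toReal this
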